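/- (Hermite-type balanced configurations) Let n ≥ 1, k ≥ 2 be integers and ε₀ ∈ {−1, 0, 1}, with k ≥ 4 in case ε₀ = 1. Let φ = e^{2πi/k}. Then there exist real numbers 0 < p₁ < p₂ < … < pₙ such that the configuration whose points are p_l·φ^m for l = 1, …, n and m = 0, …, k−1, all with charge −1, together with the origin with charge ε₀ when ε₀ ≠ 0, is balanced. -/

import Mathlib

/-!
Write `c = (k - 1) / 2 - ε₀ > 0`. The force at the point `x_l φ^m` is
`φ^{-m} (x_l - c / x_l - ∑_{l' ≠ l} k x_l^{k-1} / (x_l^k - x_{l'}^k))`: the ring of radius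
`x_{l'} ≠ x_l` contributes through `∑_m 1 / (z - y φ^m) = k z^{k-1} / (z^k - y^k)`, the
logarithmic derivative of `z^k - y^k = ∏_m (z - y φ^m)`, and the own ring through
`2 ∑_{ζ^k = 1, ζ ≠ u} 1 / (u - ζ) = (k - 1) / u`, obtained by pairing `ζ` with `u² / ζ`. The force
at the origin vanishes because the `k`-th roots of unity sum to zero.

So it suffices to solve the radial equations, which say that `x` is a critical point of
`E(p) = ∑_l (p_l² / 2 - c log p_l) - ∑_{a < b} log (p_b^k - p_a^k)` on the open cone
`0 < p_1 < ⋯ < p_n`. As `log (p_b^k - p_a^k) ≤ k (p_a + p_b)`, `E` splits into one-variable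
terms that tend to `+∞` at `0` and at `∞` and pair terms that are nonnegative and tend to `+∞` on
the walls `p_a = p_b`. Hence the sublevel sets of `E` are compact subsets of the cone, and `E` has
a local minimum there.
-/

/-- The force at a point of a configuration: `F j = conj (p j) + ∑_{k ≠ j} ε k / (p j - p k)`. -/
noncomputable def force {ι : Type*} [Fintype ι] [DecidableEq ι]
    (p ε : ι → ℂ) (j : ι) : ℂ :=
  (starRingEnd ℂ) (p j) + ∑ k ∈ Finset.univ.erase j, ε k / (p j - p k)

open Finset Polynomial Real

theorem sum_inv_sub_eq_div_of_hasDerivAt {𝕜 ι : Type*} [NontriviallyNormedField 𝕜]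
    [DecidableEq ι] {s : Finset ι} {r : ι → 𝕜} {z d : 𝕜} (hz : ∀ i ∈ s, z ≠ r i)
    (hd : HasDerivAt (fun w => ∏ i ∈ s, (w - r i)) d z) :
    ∑ i ∈ s, (z - r i)⁻¹ = d / ∏ i ∈ s, (z - r i) := by
  have hprod : HasDerivAt (fun w => ∏ i ∈ s, (w - r i))
      (∑ i ∈ s, (∏ j ∈ s.erase i, (z - r j)) • (1 : 𝕜)) z :=
    HasDerivAt.fun_finsetProd fun i _ => (hasDerivAt_id z).sub_const (r i)
  have hne : ∏ i ∈ s, (z - r i) ≠ 0 := prod_ne_zero_iff.2 fun i hi => sub_ne_zero.2 (hz i hi)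
  rw [hd.unique hprod, eq_div_iff hne, sum_mul]
  refine sum_congr rfl fun i hi => ?_
  rw [← mul_prod_erase s _ hi, smul_eq_mul, mul_one, ← mul_assoc,
    inv_mul_cancel₀ (sub_ne_zero.2 (hz i hi)), one_mul]

theorem two_mul_sum_nthRootsFinset_erase_inv_sub {K : Type*} [Field K] [DecidableEq K] {k : ℕ}
    {u : K} (hu : u ∈ nthRootsFinset k (1 : K)) :
    2 * ∑ ζ ∈ (nthRootsFinset k (1 : K)).erase u, (u - ζ)⁻¹ =
      ((#(nthRootsFinset k (1 : K)) : K) - 1) / u := by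
  have hk : 0 < k := Nat.pos_of_ne_zero fun h => by simp [h] at hu
  have hu0 : u ≠ 0 := ne_zero_of_mem_nthRootsFinset one_ne_zero hu
  have huk : u ^ k = 1 := (mem_nthRootsFinset hk 1).1 hu
  set s := (nthRootsFinset k (1 : K)).erase u
  have hs : ∀ ζ ∈ s, ζ ≠ u ∧ ζ ^ k = 1 := fun ζ hζ =>
    ⟨ne_of_mem_erase hζ, (mem_nthRootsFinset hk 1).1 (mem_of_mem_erase hζ)⟩
  have hs0 : ∀ ζ ∈ s, ζ ≠ 0 := fun ζ hζ h0 => by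
    have := (hs ζ hζ).2
    simp [h0, hk.ne'] at this
  have hσ : ∀ ζ ∈ s, u ^ 2 * ζ⁻¹ ∈ s := fun ζ hζ => by
    refine mem_erase.2 ⟨fun h => (hs ζ hζ).1 ?_, (mem_nthRootsFinset hk 1).2 ?_⟩
    · have h' := (mul_inv_eq_iff_eq_mul₀ (hs0 ζ hζ)).1 h
      exact mul_left_cancel₀ hu0 (by rw [← h']; ring)
    · rw [mul_pow, inv_pow, (hs ζ hζ).2, ← pow_mul, pow_mul', huk]; simp
  have hpair : ∀ ζ ∈ s, (u - ζ)⁻¹ + (u - u ^ 2 * ζ⁻¹)⁻¹ = u⁻¹ := fun ζ hζ => by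
    have h1 : u - ζ ≠ 0 := sub_ne_zero.2 (hs ζ hζ).1.symm
    have := hs0 ζ hζ
    rw [show u - u ^ 2 * ζ⁻¹ = -(u * (u - ζ) / ζ) by field_simp; ring]
    field_simp
    ring
  have hreflect : ∑ ζ ∈ s, (u - ζ)⁻¹ = ∑ ζ ∈ s, (u - u ^ 2 * ζ⁻¹)⁻¹ :=
    (sum_nbij' (fun ζ => u ^ 2 * ζ⁻¹) (fun ζ => u ^ 2 * ζ⁻¹) hσ hσ
      (fun ζ _ => by field_simp) (fun ζ _ => by field_simp) fun ζ _ => rfl).symm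
  rw [two_mul]
  nth_rewrite 2 [hreflect]
  rw [← sum_add_distrib, sum_congr rfl hpair, sum_const, card_erase_of_mem hu, nsmul_eq_mul,
    Nat.cast_sub (card_pos.2 ⟨u, hu⟩), Nat.cast_one, div_eq_mul_inv]

namespace IsPrimitiveRoot

theorem sum_fin_pow_eq_sum_nthRootsFinset {R M : Type*} [CommRing R] [IsDomain R]
    [AddCommMonoid M] {φ : R} {k : ℕ} (hφ : IsPrimitiveRoot φ k) (f : R → M) :
    ∑ m : Fin k, f (φ ^ (m : ℕ)) = ∑ ζ ∈ nthRootsFinset k (1 : R), f ζ := by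
  rcases Nat.eq_zero_or_pos k with rfl | hk
  · simp
  have : NeZero k := ⟨hk.ne'⟩
  refine sum_nbij (fun m => φ ^ (m : ℕ)) (fun m _ => ?_) (fun a _ b _ h => ?_)
    (fun ζ hζ => ?_) fun _ _ => rfl
  · exact (Polynomial.mem_nthRootsFinset hk 1).2
      (by rw [← pow_mul, mul_comm, pow_mul, hφ.pow_eq_one, one_pow])
  · exact Fin.ext (hφ.pow_inj a.isLt b.isLt h)
  · obtain ⟨i, hi, rfl⟩ := hφ.eq_pow_of_pow_eq_one ((Polynomial.mem_nthRootsFinset hk 1).1 hζ)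
    exact ⟨⟨i, hi⟩, mem_coe.2 (mem_univ _), rfl⟩

section NormedField

variable {𝕜 : Type*} [NontriviallyNormedField 𝕜] [DecidableEq 𝕜] {φ : 𝕜} {k : ℕ}

theorem sum_nthRootsFinset_inv_sub_mul (hφ : IsPrimitiveRoot φ k) {y z : 𝕜}
    (h : z ^ k ≠ y ^ k) :
    ∑ ζ ∈ nthRootsFinset k (1 : 𝕜), (z - y * ζ)⁻¹ = k * z ^ (k - 1) / (z ^ k - y ^ k) := by
  have hk : 0 < k := Nat.pos_of_ne_zero fun hk => h (by simp [hk])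
  have hprod (w : 𝕜) : ∏ ζ ∈ nthRootsFinset k (1 : 𝕜), (w - y * ζ) = w ^ k - y ^ k := by
    simp_rw [mul_comm y]
    exact (hφ.pow_sub_pow_eq_prod_sub_mul w y hk).symm
  have hz : ∀ ζ ∈ nthRootsFinset k (1 : 𝕜), z ≠ y * ζ := fun ζ hζ hzζ => h <| by
    rw [hzζ, mul_pow, (Polynomial.mem_nthRootsFinset hk 1).1 hζ, mul_one]
  rw [sum_inv_sub_eq_div_of_hasDerivAt hz (d := k * z ^ (k - 1)), hprod]
  simpa only [hprod] using (hasDerivAt_pow k z).sub_const (y ^ k)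

theorem sum_inv_sub_mul_pow (hφ : IsPrimitiveRoot φ k) {y z : 𝕜} (h : z ^ k ≠ y ^ k) :
    ∑ m : Fin k, (z - y * φ ^ (m : ℕ))⁻¹ = k * z ^ (k - 1) / (z ^ k - y ^ k) := by
  rw [hφ.sum_fin_pow_eq_sum_nthRootsFinset fun ζ => (z - y * ζ)⁻¹,
    hφ.sum_nthRootsFinset_inv_sub_mul h]

end NormedField

-- The term `m' = m` is `0⁻¹ = 0`.
theorem two_mul_sum_inv_pow_sub_pow {K : Type*} [Field K] [DecidableEq K] {φ : K} {k : ℕ}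
    (hφ : IsPrimitiveRoot φ k) (m : Fin k) :
    2 * ∑ m' : Fin k, (φ ^ (m : ℕ) - φ ^ (m' : ℕ))⁻¹ = (k - 1) / φ ^ (m : ℕ) := by
  have hm : φ ^ (m : ℕ) ∈ nthRootsFinset k (1 : K) :=
    (Polynomial.mem_nthRootsFinset m.pos 1).2 (by
      rw [← pow_mul, mul_comm, pow_mul, hφ.pow_eq_one, one_pow])
  rw [hφ.sum_fin_pow_eq_sum_nthRootsFinset fun ζ => (φ ^ (m : ℕ) - ζ)⁻¹,
    ← sum_erase _ (by rw [sub_self, inv_zero]), two_mul_sum_nthRootsFinset_erase_inv_sub hm,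
    hφ.card_nthRootsFinset]

end IsPrimitiveRoot

theorem IsCompact.exists_isLocalMin_of_sublevel_subset {X : Type*} [TopologicalSpace X]
    {f : X → ℝ} {U K : Set X} (hK : IsCompact K) (hU : IsOpen U) (hKU : K ⊆ U)
    (hf : ContinuousOn f K) {x₀ : X} (hx₀ : x₀ ∈ U) (hsub : ∀ x ∈ U, f x ≤ f x₀ → x ∈ K) :
    ∃ x ∈ U, IsLocalMin f x := by
  obtain ⟨x, hxK, hmin⟩ := hK.exists_isMinOn ⟨x₀, hsub x₀ hx₀ le_rfl⟩ hf
  refine ⟨x, hKU hxK, Filter.mem_of_superset (hU.mem_nhds (hKU hxK)) fun y hy => ?_⟩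
  rcases le_or_gt (f y) (f x₀) with hy₀ | hy₀
  · exact hmin (hsub y hy hy₀)
  · exact (hmin (hsub x₀ hx₀ le_rfl)).trans hy₀.le

theorem IsLocalMin.hasDerivAt_update_eq_zero {ι : Type*} [DecidableEq ι]
    {f : (ι → ℝ) → ℝ} {x : ι → ℝ} (hf : IsLocalMin f x) {i : ι} {d : ℝ}
    (hd : HasDerivAt (fun t => f (Function.update x i t)) d (x i)) : d = 0 := by
  refine IsLocalMin.hasDerivAt_eq_zero ?_ hd
  rw [← Function.update_eq_self i x] at hf
  exact hf.comp_continuous (continuous_const.update i continuous_id).continuousAt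

theorem log_pow_sub_pow_le {x y : ℝ} (hx : 0 ≤ x) (hy : 0 ≤ y) (k : ℕ) :
    log (x ^ k - y ^ k) ≤ k * (x + y) := by
  rcases eq_or_ne (x ^ k - y ^ k) 0 with h | h
  · rw [h, log_zero]; positivity
  rcases Nat.eq_zero_or_pos k with rfl | hk
  · simp
  calc log (x ^ k - y ^ k) = log |x ^ k - y ^ k| := (log_abs _).symm
    _ ≤ log ((x + y) ^ k) := by
        refine log_le_log (abs_pos.2 h) ?_
        calc |x ^ k - y ^ k| ≤ |x ^ k| + |y ^ k| := abs_sub _ _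
          _ = x ^ k + y ^ k := by rw [abs_of_nonneg (by positivity), abs_of_nonneg (by positivity)]
          _ ≤ (x + y) ^ k := pow_add_pow_le hx hy hk.ne'
    _ = k * log (x + y) := log_pow _ _
    _ ≤ k * (x + y) := by gcongr; exact log_le_self (by positivity)

theorem neg_sq_div_two_le_sq_div_two_sub_log {c : ℝ} (hc : 0 ≤ c) (K : ℝ) {t : ℝ} (ht : 0 < t) :
    -((c + K) ^ 2 / 2) ≤ t ^ 2 / 2 - c * log t - K * t := by
  have := mul_le_mul_of_nonneg_left (log_le_self ht.le) hc
  nlinarith [sq_nonneg (t - (c + K))]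

theorem exists_bounds_of_sq_div_two_sub_log_le {c : ℝ} (hc : 0 < c) (K A : ℝ) :
    ∃ δ > 0, ∃ B, ∀ t > 0, t ^ 2 / 2 - c * log t - K * t ≤ A → δ ≤ t ∧ t ≤ B := by
  refine ⟨exp (-((A + K ^ 2 / 2) / c)), exp_pos _, 2 * (c + |K| + |A|) + 1,
    fun t ht h => ⟨?_, ?_⟩⟩
  · have hlog : -((A + K ^ 2 / 2) / c) ≤ log t := by
      rw [neg_le, le_div_iff₀ hc]
      nlinarith [sq_nonneg (t - K)]
    simpa [exp_log ht] using exp_le_exp.2 hlog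
  · have := mul_le_mul_of_nonneg_left (log_le_self ht.le) hc.le
    by_contra! hB
    nlinarith [le_abs_self K, neg_abs_le K, le_abs_self A, abs_nonneg A, abs_nonneg K]

theorem sum_sum_erase_comm {ι M : Type*} [DecidableEq ι] [AddCommMonoid M] (s : Finset ι)
    (f : ι → ι → M) : ∑ a ∈ s, ∑ b ∈ s.erase a, f a b = ∑ a ∈ s, ∑ b ∈ s.erase a, f b a :=
  sum_comm' fun a b => by simp only [mem_erase]; tauto

theorem sum_sum_erase_mul_sub_div {ι K : Type*} [Fintype ι] [DecidableEq ι] [Field K]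
    {l : ι} {e : ι → K} (he : ∀ a, a ≠ l → e a = 0) (g q : ι → K) :
    ∑ a, ∑ b ∈ univ.erase a, (g a * e a - g b * e b) / (q a - q b) =
      2 * ∑ b ∈ univ.erase l, g l * e l / (q l - q b) := by
  set F : ι → ι → K := fun a b => g a * e a / (q a - q b)
  have hsplit (a b : ι) : (g a * e a - g b * e b) / (q a - q b) = F a b + F b a := by
    rw [sub_div, sub_eq_add_neg, ← div_neg, neg_sub]
  have hF : ∑ a, ∑ b ∈ univ.erase a, F a b = ∑ b ∈ univ.erase l, g l * e l / (q l - q b) :=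
    Fintype.sum_eq_single l fun a ha => sum_eq_zero fun b _ => by simp [F, he a ha]
  simp only [hsplit, sum_add_distrib]
  rw [← sum_sum_erase_comm univ F, hF, two_mul]

section Energy

variable {ι : Type*} [Fintype ι] [DecidableEq ι]

-- `Real.log` is even, so each unordered pair `{a, b}` contributes `log |p a ^ k - p b ^ k|` twice.
noncomputable def energy (k : ℕ) (c : ℝ) (p : ι → ℝ) : ℝ :=
  ∑ l, (p l ^ 2 / 2 - c * log (p l)) - (∑ a, ∑ b ∈ univ.erase a, log (p a ^ k - p b ^ k)) / 2

theorem energy_eq_sum_add_sum (k : ℕ) (c : ℝ) (p : ι → ℝ) :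
    energy k c p = ∑ l, (p l ^ 2 / 2 - c * log (p l) - k * (Fintype.card ι - 1 : ℕ) * p l) +
      (∑ a, ∑ b ∈ univ.erase a, (k * (p a + p b) - log (p a ^ k - p b ^ k))) / 2 := by
  have hlin : ∑ a, ∑ b ∈ univ.erase a, k * (p a + p b) =
      2 * ∑ l, k * (Fintype.card ι - 1 : ℕ) * p l := by
    simp only [mul_add, sum_add_distrib]
    rw [← sum_sum_erase_comm univ fun a _ => (k : ℝ) * p a]
    simp only [sum_const, card_erase_of_mem (mem_univ _), card_univ, nsmul_eq_mul]
    rw [mul_sum, ← sum_add_distrib]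
    exact sum_congr rfl fun _ _ => by ring
  simp only [energy, sum_sub_distrib, hlin]
  ring

theorem exists_bounds_of_energy_le (k : ℕ) {c : ℝ} (hc : 0 < c) (M : ℝ) :
    ∃ δ > 0, ∃ B, ∃ η > 0, ∀ p : ι → ℝ, (∀ l, 0 < p l) →
      (∀ a b, a ≠ b → p a ^ k ≠ p b ^ k) → energy k c p ≤ M →
        (∀ l, δ ≤ p l ∧ p l ≤ B) ∧ ∀ a b, a ≠ b → η ≤ |p a ^ k - p b ^ k| := by
  set K : ℝ := k * (Fintype.card ι - 1 : ℕ)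
  set C : ℝ := (c + K) ^ 2 / 2
  set A : ℝ := M + Fintype.card ι * C
  obtain ⟨δ, hδ, B, hbounds⟩ := exists_bounds_of_sq_div_two_sub_log_le hc K A
  refine ⟨δ, hδ, B, exp (-(2 * A)), exp_pos _, fun p hp hdist hE => ?_⟩
  set h : ι → ℝ := fun l => p l ^ 2 / 2 - c * log (p l) - K * p l
  set w : ι → ι → ℝ := fun a b => k * (p a + p b) - log (p a ^ k - p b ^ k)
  have hh : ∀ l, -C ≤ h l := fun l => neg_sq_div_two_le_sq_div_two_sub_log hc.le K (hp l)
  have hw : ∀ a b, 0 ≤ w a b := fun a b => sub_nonneg.2 (log_pow_sub_pow_le (hp a).le (hp b).le k)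
  have hE' : ∑ l, h l + (∑ a, ∑ b ∈ univ.erase a, w a b) / 2 ≤ M := energy_eq_sum_add_sum k c p ▸ hE
  have hC : -(Fintype.card ι * C) ≤ ∑ l, h l := by
    simpa using card_nsmul_le_sum univ h (-C) fun l _ => hh l
  have hW : 0 ≤ ∑ a, ∑ b ∈ univ.erase a, w a b :=
    sum_nonneg fun a _ => sum_nonneg fun b _ => hw a b
  refine ⟨fun l => hbounds (p l) (hp l) ?_, fun a b hab => ?_⟩
  · have hsingle : h l + C ≤ ∑ l, (h l + C) :=
      single_le_sum (f := fun l => h l + C) (fun l _ => by linarith [hh l]) (mem_univ l)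
    have hsum : ∑ l, (h l + C) = ∑ l, h l + Fintype.card ι * C := by simp [sum_add_distrib]
    have hC0 : 0 ≤ C := by positivity
    show h l ≤ A
    linarith
  · have hsingle : w a b ≤ ∑ a, ∑ b ∈ univ.erase a, w a b :=
      (single_le_sum (fun b _ => hw a b) (mem_erase.2 ⟨hab.symm, mem_univ b⟩)).trans
        (single_le_sum (f := fun a => ∑ b ∈ univ.erase a, w a b)
          (fun a _ => sum_nonneg fun b _ => hw a b) (mem_univ a))
    have hlog : -(2 * A) ≤ log |p a ^ k - p b ^ k| := by
      have : 0 ≤ (k : ℝ) * (p a + p b) := by have := hp a; have := hp b; positivity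
      rw [log_abs]
      linarith
    calc exp (-(2 * A)) ≤ exp (log |p a ^ k - p b ^ k|) := exp_le_exp.2 hlog
      _ = |p a ^ k - p b ^ k| := exp_log (abs_pos.2 (sub_ne_zero.2 (hdist a b hab)))

theorem continuousOn_energy (k : ℕ) (c : ℝ) :
    ContinuousOn (energy k c)
      {p : ι → ℝ | (∀ l, p l ≠ 0) ∧ ∀ a b, a ≠ b → p a ^ k ≠ p b ^ k} := by
  unfold energy
  refine ContinuousOn.sub (continuousOn_finsetSum _ fun l _ => ?_)
    ((continuousOn_finsetSum _ fun a _ => continuousOn_finsetSum _ fun b hb => ?_).div_const 2)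
  · exact (by fun_prop : Continuous fun p : ι → ℝ => p l ^ 2 / 2).continuousOn.sub
      (continuousOn_const.mul ((continuous_apply l).continuousOn.log fun p hp => hp.1 l))
  · exact ((by fun_prop : Continuous fun p : ι → ℝ => p a ^ k - p b ^ k).continuousOn.log
      fun p hp => sub_ne_zero.2 (hp.2 a b (ne_of_mem_erase hb).symm))

theorem hasDerivAt_energy_update (k : ℕ) (c : ℝ) {p : ι → ℝ} (hp : ∀ l, p l ≠ 0)
    (hdist : ∀ a b, a ≠ b → p a ^ k ≠ p b ^ k) (l : ι) :
    HasDerivAt (fun t => energy k c (Function.update p l t))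
      (p l - c / p l - ∑ b ∈ univ.erase l, k * p l ^ (k - 1) / (p l ^ k - p b ^ k)) (p l) := by
  set e : ι → ℝ := Pi.single l 1
  have he (a : ι) (ha : a ≠ l) : e a = 0 := Pi.single_eq_of_ne ha 1
  have hcoord (a : ι) : HasDerivAt (fun t => Function.update p l t a) (e a) (p l) := by
    have := hasDerivAt_pi.1 (hasDerivAt_update p l (p l)) a
    simpa using this
  have hself : Function.update p l (p l) = p := Function.update_eq_self l p
  have hsingle (a : ι) : HasDerivAt (fun t => Function.update p l t a ^ 2 / 2 -
      c * log (Function.update p l t a)) (p a * e a - c * (e a / p a)) (p l) := by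
    have := (((hcoord a).fun_pow 2).div_const 2).fun_sub (((hcoord a).log ?_).const_mul c)
    · rw [hself] at this; exact this.congr_deriv (by push_cast; ring)
    · simpa [hself] using hp a
  have hpair (a b : ι) (hab : a ≠ b) : HasDerivAt (fun t => log (Function.update p l t a ^ k -
      Function.update p l t b ^ k)) ((k * p a ^ (k - 1) * e a - k * p b ^ (k - 1) * e b) /
        (p a ^ k - p b ^ k)) (p l) := by
    have := (((hcoord a).fun_pow k).fun_sub ((hcoord b).fun_pow k)).log ?_
    · rw [hself] at this; exact this
    · rw [hself]; exact sub_ne_zero.2 (hdist a b hab)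
  have hE : HasDerivAt (fun t => energy k c (Function.update p l t))
      (∑ a, (p a * e a - c * (e a / p a)) - (∑ a, ∑ b ∈ univ.erase a,
        (k * p a ^ (k - 1) * e a - k * p b ^ (k - 1) * e b) / (p a ^ k - p b ^ k)) / 2) (p l) :=
    (HasDerivAt.fun_sum fun a _ => hsingle a).fun_sub ((HasDerivAt.fun_sum fun a _ =>
      HasDerivAt.fun_sum fun b hb => hpair a b (ne_of_mem_erase hb).symm).div_const 2)
  refine hE.congr_deriv ?_
  have hlin : ∑ a, (p a * e a - c * (e a / p a)) = p l - c / p l := by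
    rw [Fintype.sum_eq_single l fun a ha => by simp [he a ha]]
    simp [e, div_eq_mul_inv]
  rw [sum_sum_erase_mul_sub_div he (fun a => k * p a ^ (k - 1)) (fun a => p a ^ k), hlin]
  simp [e]

end Energy

theorem StrictMono.pow_ne_pow {ι : Type*} [LinearOrder ι] {x : ι → ℝ} (hx : StrictMono x)
    (hx₀ : ∀ l, 0 ≤ x l) {k : ℕ} (hk : k ≠ 0) {a b : ι} (hab : a ≠ b) : x a ^ k ≠ x b ^ k :=
  fun h => hab (hx.injective ((pow_left_inj₀ (hx₀ a) (hx₀ b) hk).1 h))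

theorem isOpen_setOf_pos_and_strictMono {ι : Type*} [Finite ι] [Preorder ι] :
    IsOpen {p : ι → ℝ | (∀ l, 0 < p l) ∧ StrictMono p} := by
  simp only [StrictMono, Set.ofPred_and, Set.ofPred_forall]
  exact (isOpen_iInter_of_finite fun l => isOpen_lt continuous_const (continuous_apply l)).inter
    (isOpen_iInter_of_finite fun a => isOpen_iInter_of_finite fun b =>
      isOpen_iInter_of_finite fun _ => isOpen_lt (continuous_apply a) (continuous_apply b))

theorem exists_strictMono_critical_point {ι : Type*} [Fintype ι] [LinearOrder ι] {k : ℕ}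
    (hk : k ≠ 0) {c : ℝ} (hc : 0 < c) :
    ∃ x : ι → ℝ, (∀ l, 0 < x l) ∧ StrictMono x ∧
      ∀ l, x l - c / x l = ∑ b ∈ univ.erase l, k * x l ^ (k - 1) / (x l ^ k - x b ^ k) := by
  set U : Set (ι → ℝ) := {p | (∀ l, 0 < p l) ∧ StrictMono p}
  have hpow_ne {p : ι → ℝ} (hp : p ∈ U) {a b : ι} (hab : a ≠ b) : p a ^ k ≠ p b ^ k :=
    hp.2.pow_ne_pow (fun l => (hp.1 l).le) hk hab
  set x₀ : ι → ℝ := fun i => (Fintype.orderIsoFinOfCardEq ι rfl).symm i + 1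
  have hx₀ : x₀ ∈ U := ⟨fun i => by positivity, fun a b hab => by
    simpa [x₀] using (Fintype.orderIsoFinOfCardEq ι rfl).symm.strictMono hab⟩
  obtain ⟨δ, hδ, B, η, hη, hbounds⟩ := exists_bounds_of_energy_le (ι := ι) k hc (energy k c x₀)
  set K : Set (ι → ℝ) :=
    {p | (∀ l, p l ∈ Set.Icc δ B) ∧ Monotone p ∧ ∀ a b, a ≠ b → η ≤ |p a ^ k - p b ^ k|}
  have hK : IsCompact K := by
    refine (isCompact_univ_pi fun _ => isCompact_Icc).of_isClosed_subset ?_ fun p hp l _ => hp.1 l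
    simp only [K, Set.ofPred_and, Set.ofPred_forall]
    exact (isClosed_iInter fun l => isClosed_Icc.preimage (continuous_apply l)).inter
      (isClosed_monotone.inter (isClosed_iInter fun a => isClosed_iInter fun b =>
        isClosed_iInter fun _ => isClosed_le continuous_const (by fun_prop)))
  have hKU : K ⊆ U := fun p hp => by
    refine ⟨fun l => hδ.trans_le (hp.1 l).1, hp.2.1.strictMono_of_injective fun a b h => ?_⟩
    by_contra hab
    have := hp.2.2 a b hab
    rw [h, sub_self, abs_zero] at this
    linarith
  obtain ⟨x, hxU, hmin⟩ := hK.exists_isLocalMin_of_sublevel_subset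
    isOpen_setOf_pos_and_strictMono hKU
    ((continuousOn_energy k c).mono fun p hp =>
      ⟨fun l => (hKU hp).1 l |>.ne', fun a b => hpow_ne (hKU hp)⟩) hx₀
    fun p hp hE => by
      obtain ⟨h1, h2⟩ := hbounds p hp.1 (fun a b => hpow_ne hp) hE
      exact ⟨h1, hp.2.monotone, h2⟩
  refine ⟨x, hxU.1, hxU.2, fun l => sub_eq_zero.1 ?_⟩
  exact hmin.hasDerivAt_update_eq_zero
    (hasDerivAt_energy_update k c (fun l => (hxU.1 l).ne') (fun a b => hpow_ne hxU) l)

-- The omitted term `ε j / (p j - p j)` is `ε j / 0 = 0`.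
theorem force_eq_add_sum {ι : Type*} [Fintype ι] [DecidableEq ι] (p ε : ι → ℂ) (j : ι) :
    force p ε j = (starRingEnd ℂ) (p j) + ∑ i, ε i / (p j - p i) := by
  rw [force, sum_erase _ (by rw [sub_self, div_zero])]

section RingConfiguration

variable {ι : Type*} [Fintype ι] [DecidableEq ι] {k : ℕ} {x : ι → ℝ} {φ : ℂ}
  {z ε : (ι × Fin k) ⊕ Unit → ℂ}

theorem force_inr_eq_zero (hφ : IsPrimitiveRoot φ k) (hk : 1 < k)
    (hz : ∀ l m, z (.inl (l, m)) = x l * φ ^ (m : ℕ)) (hz₀ : z (.inr ()) = 0)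
    (hε : ∀ j, ε (.inl j) = -1) : force z ε (.inr ()) = 0 := by
  have hring (l : ι) : ∑ m : Fin k, (-1) / (0 - x l * φ ^ (m : ℕ)) = 0 := by
    simp_rw [zero_sub, neg_div_neg_eq, one_div, mul_inv, ← mul_sum, ← inv_pow,
      Fin.sum_univ_eq_sum_range (fun i => φ⁻¹ ^ i), hφ.inv.geom_sum_eq_zero hk, mul_zero]
  rw [force_eq_add_sum, Fintype.sum_sum_type, Fintype.sum_prod_type]
  simp only [hz, hz₀, hε, hring, map_zero, sum_const_zero, sub_self, div_zero, add_zero]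

theorem force_inl_eq (hφ : IsPrimitiveRoot φ k) {r : ℝ}
    (hz : ∀ l m, z (.inl (l, m)) = x l * φ ^ (m : ℕ)) (hz₀ : z (.inr ()) = 0)
    (hε : ∀ j, ε (.inl j) = -1) (hε₀ : ε (.inr ()) = r) {l : ι} (hl : x l ≠ 0)
    (hdist : ∀ b, b ≠ l → x l ^ k ≠ x b ^ k) (m : Fin k) :
    force z ε (.inl (l, m)) = (φ ^ (m : ℕ))⁻¹ * ((x l - ((k - 1) / 2 - r) / x l -
      ∑ b ∈ univ.erase l, k * x l ^ (k - 1) / (x l ^ k - x b ^ k) : ℝ) : ℂ) := by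
  have hX : (x l : ℂ) ≠ 0 := Complex.ofReal_ne_zero.2 hl
  have huk : (φ ^ (m : ℕ)) ^ k = 1 := by rw [← pow_mul, mul_comm, pow_mul, hφ.pow_eq_one, one_pow]
  have hu : φ ^ (m : ℕ) ≠ 0 := pow_ne_zero _ (hφ.ne_zero m.pos.ne')
  have hconj : (starRingEnd ℂ) (φ ^ (m : ℕ)) = (φ ^ (m : ℕ))⁻¹ :=
    (RCLike.inv_eq_conj (Complex.norm_eq_one_of_pow_eq_one huk m.pos.ne')).symm
  have hsame : ∑ m' : Fin k, (-1) / (x l * φ ^ (m : ℕ) - x l * φ ^ (m' : ℕ)) =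
      -((x l : ℂ)⁻¹ * ((k - 1) / 2 * (φ ^ (m : ℕ))⁻¹)) := by
    have := hφ.two_mul_sum_inv_pow_sub_pow m
    simp_rw [← mul_sub, neg_div, one_div, mul_inv, sum_neg_distrib, ← mul_sum]
    rw [show ((k : ℂ) - 1) / 2 * (φ ^ (m : ℕ))⁻¹ = ((k - 1) / φ ^ (m : ℕ)) / 2 by ring, ← this]
    ring
  have hother (b : ι) (hb : b ≠ l) : ∑ m' : Fin k, (-1) / (x l * φ ^ (m : ℕ) - x b * φ ^ (m' : ℕ)) =
      -((φ ^ (m : ℕ))⁻¹ * (k * (x l : ℂ) ^ (k - 1) / ((x l : ℂ) ^ k - (x b : ℂ) ^ k))) := by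
    have hpow : ((x l : ℂ) * φ ^ (m : ℕ)) ^ k = (x l : ℂ) ^ k := by rw [mul_pow, huk, mul_one]
    have hne : ((x l : ℂ) * φ ^ (m : ℕ)) ^ k ≠ (x b : ℂ) ^ k := by
      rw [hpow]; exact_mod_cast hdist b hb
    simp_rw [neg_div, one_div, sum_neg_distrib, hφ.sum_inv_sub_mul_pow hne, hpow, mul_pow,
      pow_sub₀ _ hu m.pos, huk, pow_one, one_mul]
    ring
  rw [force_eq_add_sum, Fintype.sum_sum_type, Fintype.sum_prod_type,
    ← add_sum_erase _ _ (mem_univ l)]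
  simp only [hz, hz₀, hε, hε₀, Fintype.sum_unique, sub_zero]
  rw [hsame, sum_congr rfl fun b hb => hother b (ne_of_mem_erase hb), sum_neg_distrib, ← mul_sum,
    map_mul, Complex.conj_ofReal, hconj]
  push_cast
  field_simp
  ring

end RingConfiguration

theorem hermite_type_balanced (n k : ℕ) (hk : 2 ≤ k)
    (ε₀ : ℂ) (hε₀ : ε₀ = -1 ∨ ε₀ = 0 ∨ ε₀ = 1) (hk4 : ε₀ = 1 → 4 ≤ k) :
    ∃ p : Fin n → ℝ, (∀ l, 0 < p l) ∧ StrictMono p ∧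
      ((∀ j : Fin n × Fin k,
          force
            (fun i : (Fin n × Fin k) ⊕ Unit =>
              match i with
              | Sum.inl (l, m) =>
                  (p l : ℂ) * Complex.exp (2 * Real.pi * Complex.I / k) ^ (m : ℕ)
              | Sum.inr _ => 0)
            (fun i =>
              match i with
              | Sum.inl _ => -1
              | Sum.inr _ => ε₀)
            (Sum.inl j) = 0) ∧
        (ε₀ ≠ 0 →
          force
            (fun i : (Fin n × Fin k) ⊕ Unit =>
              match i with
              | Sum.inl (l, m) =>
                  (p l : ℂ) * Complex.exp (2 * Real.pi * Complex.I / k) ^ (m : ℕ)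
              | Sum.inr _ => 0)
            (fun i =>
              match i with
              | Sum.inl _ => -1
              | Sum.inr _ => ε₀)
            (Sum.inr ()) = 0)) := by
  have hφ := Complex.isPrimitiveRoot_exp k (by omega)
  obtain ⟨r, rfl, hr⟩ : ∃ r : ℝ, ε₀ = r ∧ r < ((k : ℝ) - 1) / 2 := by
    have hk' : (2 : ℝ) ≤ k := by exact_mod_cast hk
    rcases hε₀ with rfl | rfl | rfl
    · exact ⟨-1, by simp, by linarith⟩
    · exact ⟨0, by simp, by linarith⟩
    · have hk4' : (4 : ℝ) ≤ k := by exact_mod_cast hk4 rfl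
      exact ⟨1, by simp, by linarith⟩
  obtain ⟨x, hx, hmono, hcrit⟩ :=
    exists_strictMono_critical_point (ι := Fin n) (k := k) (by omega) (sub_pos.2 hr)
  refine ⟨x, hx, hmono, fun ⟨l, m⟩ => ?_,
    fun _ => force_inr_eq_zero hφ (by omega) (fun _ _ => rfl) rfl fun _ => rfl⟩
  rw [force_inl_eq hφ (fun _ _ => rfl) rfl (fun _ => rfl) rfl (hx l).ne'
    (fun b hb => hmono.pow_ne_pow (fun l => (hx l).le) (by omega) hb.symm),
    sub_eq_zero.2 (hcrit l), Complex.ofReal_zero, mul_zero]
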